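/- (Carlitz–Milne explicit formula; the q-difference representation of A.3.II in expanded form.) For all natural numbers n and k, [k]_q! · S_q(n,k) = Σ_{l=0}^{k} (−1)^{k-l} · q^{(k-l)(k-l-1)/2} · binom(k,l)_q · ([l]_q)^n, where binom(k,l)_q is the Gaussian binomial coefficient. -/

import Mathlib

/-- The q-integer `[m]_q = Σ_{i=0}^{m-1} q^i`. -/
def qInt {K : Type*} [CommRing K] (q : K) (m : ℕ) : K :=
  ∑ i ∈ Finset.range m, q ^ i

/-- The q-factorial `[m]_q! = ∏_{j=1}^{m} [j]_q`, with `[0]_q! = 1`. -/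
def qFact {K : Type*} [CommRing K] (q : K) : ℕ → K
  | 0 => 1
  | m + 1 => qInt q (m + 1) * qFact q m

/-- The Carlitz–Gould q-Stirling numbers of the second kind. -/
def qStirling {K : Type*} [CommRing K] (q : K) : ℕ → ℕ → K
  | 0, 0 => 1
  | 0, _ + 1 => 0
  | _ + 1, 0 => 0
  | n + 1, k + 1 => q ^ k * qStirling q n k + qInt q (k + 1) * qStirling q n (k + 1)

/-- The Gaussian binomial coefficients, defined by the recurrence
`binom(n+1,k+1)_q = binom(n,k)_q + q^{k+1}·binom(n,k+1)_q` with
`binom(n,0)_q = 1` and `binom(n,k)_q = 0` for `k > n`. -/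
def qBinom {K : Type*} [CommRing K] (q : K) : ℕ → ℕ → K
  | _, 0 => 1
  | 0, _ + 1 => 0
  | n + 1, k + 1 => qBinom q n k + q ^ (k + 1) * qBinom q n (k + 1)

section Aux

variable {K : Type*} [CommRing K] (q : K)

lemma tri_succ (m : ℕ) : (m + 1) * ((m + 1) - 1) / 2 = m * (m - 1) / 2 + m := by
  have h1 : (m + 1) * ((m + 1) - 1) = m * (m - 1) + m * 2 := by
    cases m with
    | zero => rfl
    | succ j => simp only [Nat.succ_sub_one]; ring
  rw [h1, Nat.add_mul_div_right _ _ (by norm_num : 0 < 2)]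

lemma qInt_zero : qInt q 0 = 0 := by simp [qInt]

lemma qInt_one : qInt q 1 = 1 := by simp [qInt]

lemma qInt_succ (m : ℕ) : qInt q (m + 1) = qInt q m + q ^ m := by
  simp [qInt, Finset.sum_range_succ]

lemma qInt_add (a b : ℕ) : qInt q (a + b) = qInt q a + q ^ a * qInt q b := by
  simp [qInt, Finset.sum_range_add, Finset.mul_sum, pow_add]

lemma qBinom_eq_zero : ∀ n k : ℕ, n < k → qBinom q n k = 0 := by
  intro n
  induction n with
  | zero =>
    intro k hk
    cases k with
    | zero => omega
    | succ j => rfl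
  | succ n ih =>
    intro k hk
    cases k with
    | zero => omega
    | succ j =>
      show qBinom q n j + q ^ (j + 1) * qBinom q n (j + 1) = 0
      rw [ih j (by omega), ih (j + 1) (by omega)]
      ring

lemma qBinom_zero (k : ℕ) : qBinom q k 0 = 1 := by cases k <;> rfl

/-- Absorption identity: `binom(k+1,l)·[k+1-l] = [k+1]·binom(k,l)`. -/
lemma qBinom_absorb : ∀ k l : ℕ,
    qBinom q (k + 1) l * qInt q (k + 1 - l) = qInt q (k + 1) * qBinom q k l := by
  intro k
  induction k with
  | zero =>
    intro l
    cases l with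
    | zero => simp [qBinom, qInt_one]
    | succ m =>
      rw [(by omega : 1 - (m + 1) = 0), qInt_zero, mul_zero,
        qBinom_eq_zero q 0 (m + 1) (by omega), mul_zero]
  | succ k ih =>
    intro l
    cases l with
    | zero =>
      show (1 : K) * qInt q (k + 2) = qInt q (k + 2) * 1
      ring
    | succ m =>
      by_cases hm : m ≤ k
      · have e1 := ih m
        have e2 := ih (m + 1)
        rw [(by omega : k + 1 - m = (k - m) + 1)] at e1
        rw [(by omega : k + 1 - (m + 1) = k - m)] at e2
        show (qBinom q (k + 1) m + q ^ (m + 1) * qBinom q (k + 1) (m + 1)) *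
            qInt q (k + 1 + 1 - (m + 1)) = qInt q (k + 2) *
            (qBinom q k m + q ^ (m + 1) * qBinom q k (m + 1))
        rw [(by omega : k + 1 + 1 - (m + 1) = (k - m) + 1)]
        calc (qBinom q (k + 1) m + q ^ (m + 1) * qBinom q (k + 1) (m + 1)) *
              qInt q ((k - m) + 1)
            = (qBinom q (k + 1) m * qInt q ((k - m) + 1)) +
              q ^ (m + 1) * (qBinom q (k + 1) (m + 1) * qInt q (k - m)) +
              (q ^ (m + 1) * q ^ (k - m)) * qBinom q (k + 1) (m + 1) := by
              rw [qInt_succ q (k - m)]; ring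
          _ = qInt q (k + 1) * qBinom q k m +
              q ^ (m + 1) * (qInt q (k + 1) * qBinom q k (m + 1)) +
              q ^ (k + 1) * qBinom q (k + 1) (m + 1) := by
              rw [e1, e2, ← pow_add, (by omega : m + 1 + (k - m) = k + 1)]
          _ = qInt q (k + 2) * (qBinom q k m + q ^ (m + 1) * qBinom q k (m + 1)) -
              q ^ (k + 1) * (qBinom q k m + q ^ (m + 1) * qBinom q k (m + 1)) +
              q ^ (k + 1) * qBinom q (k + 1) (m + 1) := by
              rw [qInt_succ q (k + 1)]; ring
          _ = qInt q (k + 2) * (qBinom q k m + q ^ (m + 1) * qBinom q k (m + 1)) := by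
              have h : qBinom q (k + 1) (m + 1) =
                  qBinom q k m + q ^ (m + 1) * qBinom q k (m + 1) := rfl
              rw [h]; ring
      · have hR : qBinom q (k + 1) (m + 1) = 0 := qBinom_eq_zero q _ _ (by omega)
        rw [hR, mul_zero]
        by_cases hm2 : m = k + 1
        · subst hm2
          rw [(by omega : k + 1 + 1 - (k + 1 + 1) = 0), qInt_zero, mul_zero]
        · rw [qBinom_eq_zero q (k + 2) (m + 1) (by omega), zero_mul]

/-- `[l] = [k+1] - q^l·[k+1-l]` for `l ≤ k+1`. -/
lemma qInt_sub (k l : ℕ) (h : l ≤ k + 1) :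
    qInt q l = qInt q (k + 1) - q ^ l * qInt q (k + 1 - l) := by
  have h2 : k + 1 = l + (k + 1 - l) := by omega
  rw [h2, qInt_add, (by omega : l + (k + 1 - l) - l = k + 1 - l)]
  ring

/-- The alternating sum `Σ_l (-1)^{k-l} q^{tri(k-l)} binom(k,l)`. -/
noncomputable def gSum (k : ℕ) : K :=
  ∑ l ∈ Finset.range (k + 1),
    (-1 : K) ^ (k - l) * q ^ ((k - l) * ((k - l) - 1) / 2) * qBinom q k l

/-- Shifted-weight sum collapses to `-q^k · gSum k`. -/
lemma hSum_eq (k : ℕ) :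
    ∑ l ∈ Finset.range (k + 2),
      (-1 : K) ^ (k + 1 - l) * q ^ ((k + 1 - l) * ((k + 1 - l) - 1) / 2) * q ^ l *
        qBinom q k l
    = - (q ^ k * gSum q k) := by
  rw [Finset.sum_range_succ, qBinom_eq_zero q k (k + 1) (by omega), mul_zero, add_zero]
  unfold gSum
  rw [Finset.mul_sum, ← Finset.sum_neg_distrib]
  apply Finset.sum_congr rfl
  intro l hl
  simp only [Finset.mem_range] at hl
  have hlk : l ≤ k := by omega
  rw [(by omega : k + 1 - l = (k - l) + 1), tri_succ, pow_succ, pow_add]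
  have : q ^ (k - l) * q ^ l = q ^ k := by
    rw [← pow_add, (by omega : k - l + l = k)]
  calc (-1 : K) ^ (k - l) * -1 * (q ^ ((k - l) * ((k - l) - 1) / 2) * q ^ (k - l)) * q ^ l *
        qBinom q k l
      = -((-1 : K) ^ (k - l) * q ^ ((k - l) * ((k - l) - 1) / 2) * (q ^ (k - l) * q ^ l) *
        qBinom q k l) := by ring
    _ = -(q ^ k * ((-1 : K) ^ (k - l) * q ^ ((k - l) * ((k - l) - 1) / 2) *
        qBinom q k l)) := by rw [this]; ring

lemma gSum_succ (k : ℕ) : gSum q (k + 1) = gSum q k - q ^ k * gSum q k := by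
  have hrec := Finset.sum_range_succ' (fun l => (-1 : K) ^ (k + 1 - l) *
      q ^ ((k + 1 - l) * ((k + 1 - l) - 1) / 2) * qBinom q (k + 1) l) (k + 1)
  have hh := Finset.sum_range_succ' (fun l => (-1 : K) ^ (k + 1 - l) *
      q ^ ((k + 1 - l) * ((k + 1 - l) - 1) / 2) * q ^ l * qBinom q k l) (k + 1)
  have hsplit : ∀ l ∈ Finset.range (k + 1),
      (-1 : K) ^ (k + 1 - (l + 1)) * q ^ ((k + 1 - (l + 1)) * ((k + 1 - (l + 1)) - 1) / 2) *
        qBinom q (k + 1) (l + 1)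
      = ((-1 : K) ^ (k - l) * q ^ ((k - l) * ((k - l) - 1) / 2) * qBinom q k l)
        + ((-1 : K) ^ (k + 1 - (l + 1)) * q ^ ((k + 1 - (l + 1)) * ((k + 1 - (l + 1)) - 1) / 2)
            * q ^ (l + 1) * qBinom q k (l + 1)) := by
    intro l hl
    have hsub : k + 1 - (l + 1) = k - l := by omega
    rw [hsub]
    have hb : qBinom q (k + 1) (l + 1) = qBinom q k l + q ^ (l + 1) * qBinom q k (l + 1) := rfl
    rw [hb]
    ring
  calc gSum q (k + 1)
      = (∑ l ∈ Finset.range (k + 1), (-1 : K) ^ (k + 1 - (l + 1)) *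
          q ^ ((k + 1 - (l + 1)) * ((k + 1 - (l + 1)) - 1) / 2) * qBinom q (k + 1) (l + 1))
        + (-1 : K) ^ (k + 1 - 0) * q ^ ((k + 1 - 0) * ((k + 1 - 0) - 1) / 2) *
          qBinom q (k + 1) 0 := by
        unfold gSum; exact hrec
    _ = gSum q k + ((∑ l ∈ Finset.range (k + 1), (-1 : K) ^ (k + 1 - (l + 1)) *
          q ^ ((k + 1 - (l + 1)) * ((k + 1 - (l + 1)) - 1) / 2) * q ^ (l + 1) *
          qBinom q k (l + 1))
        + (-1 : K) ^ (k + 1 - 0) * q ^ ((k + 1 - 0) * ((k + 1 - 0) - 1) / 2) * q ^ 0 *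
          qBinom q k 0) := by
        rw [Finset.sum_congr rfl hsplit, Finset.sum_add_distrib]
        unfold gSum
        have hb1 : qBinom q (k + 1) 0 = (1 : K) := rfl
        have hb2 : qBinom q k 0 = (1 : K) := qBinom_zero q k
        rw [hb1, hb2, pow_zero]
        ring
    _ = gSum q k + ∑ l ∈ Finset.range (k + 2), (-1 : K) ^ (k + 1 - l) *
          q ^ ((k + 1 - l) * ((k + 1 - l) - 1) / 2) * q ^ l * qBinom q k l := by
        rw [hh]
    _ = gSum q k - q ^ k * gSum q k := by rw [hSum_eq]; ring

lemma gSum_zero_succ : ∀ k : ℕ, gSum q (k + 1) = 0 := by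
  intro k
  induction k with
  | zero =>
    rw [gSum_succ]
    have : gSum q 0 = 1 := by
      unfold gSum
      simp [qBinom]
    rw [this, pow_zero]
    ring
  | succ k ih =>
    rw [gSum_succ, ih]
    ring

/-- The key sum manipulation for the inductive step. -/
lemma step_sum (n j : ℕ) :
    (∑ l ∈ Finset.range (j + 2),
      (-1 : K) ^ (j + 1 - l) * q ^ ((j + 1 - l) * ((j + 1 - l) - 1) / 2) *
        qBinom q (j + 1) l * (qInt q l) ^ (n + 1))
    = q ^ j * qInt q (j + 1) *
        (∑ l ∈ Finset.range (j + 1),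
          (-1 : K) ^ (j - l) * q ^ ((j - l) * ((j - l) - 1) / 2) * qBinom q j l *
            (qInt q l) ^ n)
      + qInt q (j + 1) *
        (∑ l ∈ Finset.range (j + 2),
          (-1 : K) ^ (j + 1 - l) * q ^ ((j + 1 - l) * ((j + 1 - l) - 1) / 2) *
            qBinom q (j + 1) l * (qInt q l) ^ n) := by
  have hterm : ∀ l ∈ Finset.range (j + 2),
      (-1 : K) ^ (j + 1 - l) * q ^ ((j + 1 - l) * ((j + 1 - l) - 1) / 2) *
        qBinom q (j + 1) l * (qInt q l) ^ (n + 1)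
      = q ^ j * qInt q (j + 1) *
          ((-1 : K) ^ (j - l) * q ^ ((j - l) * ((j - l) - 1) / 2) * qBinom q j l *
            (qInt q l) ^ n)
        + qInt q (j + 1) *
          ((-1 : K) ^ (j + 1 - l) * q ^ ((j + 1 - l) * ((j + 1 - l) - 1) / 2) *
            qBinom q (j + 1) l * (qInt q l) ^ n) := by
    intro l hl
    simp only [Finset.mem_range] at hl
    have hle : l ≤ j + 1 := by omega
    have hpow : (qInt q l) ^ (n + 1) =
        (qInt q l) ^ n * (qInt q (j + 1) - q ^ l * qInt q (j + 1 - l)) := by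
      rw [pow_succ, ← qInt_sub q j l hle]
    rw [hpow]
    -- expand: term * [l]^n * ([j+1] - q^l [j+1-l])
    have habs := qBinom_absorb q j l
    by_cases hlj : l ≤ j
    · have hs : j + 1 - l = (j - l) + 1 := by omega
      have hqq : q ^ (j - l) * q ^ l = q ^ j := by
        rw [← pow_add, (by omega : j - l + l = j)]
      calc (-1 : K) ^ (j + 1 - l) * q ^ ((j + 1 - l) * ((j + 1 - l) - 1) / 2) *
            qBinom q (j + 1) l * ((qInt q l) ^ n *
              (qInt q (j + 1) - q ^ l * qInt q (j + 1 - l)))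
          = qInt q (j + 1) * ((-1 : K) ^ (j + 1 - l) *
              q ^ ((j + 1 - l) * ((j + 1 - l) - 1) / 2) * qBinom q (j + 1) l *
              (qInt q l) ^ n)
            - (-1 : K) ^ (j + 1 - l) * q ^ ((j + 1 - l) * ((j + 1 - l) - 1) / 2) * q ^ l *
              (qBinom q (j + 1) l * qInt q (j + 1 - l)) * (qInt q l) ^ n := by ring
        _ = qInt q (j + 1) * ((-1 : K) ^ (j + 1 - l) *
              q ^ ((j + 1 - l) * ((j + 1 - l) - 1) / 2) * qBinom q (j + 1) l *
              (qInt q l) ^ n)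
            - (-1 : K) ^ (j + 1 - l) * q ^ ((j + 1 - l) * ((j + 1 - l) - 1) / 2) * q ^ l *
              (qInt q (j + 1) * qBinom q j l) * (qInt q l) ^ n := by rw [habs]
        _ = _ := by
            rw [hs, tri_succ, pow_succ (-1 : K) (j - l), pow_add q _ (j - l)]
            calc qInt q (j + 1) * ((-1 : K) ^ (j - l) * -1 *
                  (q ^ ((j - l) * ((j - l) - 1) / 2) * q ^ (j - l)) * qBinom q (j + 1) l *
                  (qInt q l) ^ n)
                - (-1 : K) ^ (j - l) * -1 *
                  (q ^ ((j - l) * ((j - l) - 1) / 2) * q ^ (j - l)) * q ^ l *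
                  (qInt q (j + 1) * qBinom q j l) * (qInt q l) ^ n
                = (q ^ (j - l) * q ^ l) * qInt q (j + 1) *
                    ((-1 : K) ^ (j - l) * q ^ ((j - l) * ((j - l) - 1) / 2) * qBinom q j l *
                      (qInt q l) ^ n)
                  + qInt q (j + 1) * ((-1 : K) ^ (j - l) * -1 *
                    (q ^ ((j - l) * ((j - l) - 1) / 2) * q ^ (j - l)) * qBinom q (j + 1) l *
                    (qInt q l) ^ n) := by ring
              _ = _ := by rw [hqq]
    · have hl1 : l = j + 1 := by omega
      subst hl1
      rw [(by omega : j + 1 - (j + 1) = 0), qInt_zero, mul_zero, sub_zero,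
        qBinom_eq_zero q j (j + 1) (by omega)]
      ring
  rw [Finset.sum_congr rfl hterm, Finset.sum_add_distrib, ← Finset.mul_sum, ← Finset.mul_sum]
  congr 1
  congr 1
  rw [Finset.sum_range_succ, qBinom_eq_zero q j (j + 1) (by omega)]
  ring

end Aux

/-- Carlitz–Milne explicit formula:
`[k]_q! · S_q(n,k) = Σ_{l=0}^{k} (−1)^{k-l} q^{(k-l)(k-l-1)/2} binom(k,l)_q ([l]_q)^n`. -/
theorem carlitz_milne_explicit {K : Type*} [CommRing K] (q : K) (n k : ℕ) :
    qFact q k * qStirling q n k =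
      ∑ l ∈ Finset.range (k + 1),
        (-1 : K) ^ (k - l) * q ^ ((k - l) * (k - l - 1) / 2) * qBinom q k l *
          (qInt q l) ^ n := by
  induction n generalizing k with
  | zero =>
    cases k with
    | zero => simp [qFact, qStirling, qBinom]
    | succ j =>
      have h0 : qStirling q 0 (j + 1) = 0 := rfl
      rw [h0, mul_zero]
      have := gSum_zero_succ q j
      unfold gSum at this
      rw [← this]
      apply Finset.sum_congr rfl
      intro l hl
      rw [pow_zero, mul_one]
  | succ n ih =>
    cases k with
    | zero =>
      have h0 : qStirling q (n + 1) 0 = 0 := rfl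
      rw [h0, mul_zero]
      simp [qInt_zero]
    | succ j =>
      have hS : qStirling q (n + 1) (j + 1) =
          q ^ j * qStirling q n j + qInt q (j + 1) * qStirling q n (j + 1) := rfl
      have hF : qFact q (j + 1) = qInt q (j + 1) * qFact q j := rfl
      rw [hS, hF, step_sum q n j, ← ih j, ← ih (j + 1), hF]
      ring
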